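/- arXiv:1507.03160 — 7 statements merged into one kernel-verified Lean document; each statement's English description precedes it below -/
import Mathlib

section
/- Let G = (V,E) be a k-uniform hypergraph with k ≥ 2 and let r ≥ p ≥ 3 be integers with k ≥ p. Fix a vertex v ∈ V and define the (k−1)-uniform hypergraph G' on vertex set V∖{v} whose hyperedge set consists of: (i) the set e∖{v} for every hyperedge e ∈ E with v ∈ e, and (ii) every (k−1)-element subset of e for every hyperedge e ∈ E with v ∉ e. If G admits a strong (r,p) cover of size t, then G' admits a strong (r,p−1) cover of size at most t; in particular χ^c(G',k−1,r,p−1) ≤ χ^c(G,k,r,p). -/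
open Finset

/-- `E` (the hyperedge set of a hypergraph on vertex set `V`) has a strong `(r,p)` cover of
size `t`: there are `t` `r`-colorings of `V` such that every hyperedge receives at least `p`
distinct colors in at least one of them. -/
def HasStrongCover {V : Type*} [DecidableEq V] (E : Finset (Finset V)) (r p t : ℕ) : Prop :=
  ∃ χ : Fin t → V → Fin r, ∀ e ∈ E, ∃ i, p ≤ (e.image (χ i)).card

/-- The strong `(r,p)` cover number: minimum size of a strong `(r,p)` cover. -/
noncomputable def coverNumber {V : Type*} [DecidableEq V] (E : Finset (Finset V)) (r p : ℕ) : ℕ :=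
  sInf {t | HasStrongCover E r p t}

lemma image_card_le_aux {V W : Type*} [DecidableEq V] [DecidableEq W] (f : V → W)
    {e e' : Finset V} (h : e' ⊆ e) :
    (e.image f).card ≤ (e'.image f).card + (e \ e').card := by
  calc (e.image f).card = ((e' ∪ (e \ e')).image f).card := by
        rw [Finset.union_sdiff_of_subset h]
    _ = ((e'.image f) ∪ ((e \ e').image f)).card := by rw [Finset.image_union]
    _ ≤ (e'.image f).card + ((e \ e').image f).card := Finset.card_union_le _ _
    _ ≤ _ := by gcongr; exact Finset.card_image_le

theorem stmt3 {V : Type*} [Fintype V] [DecidableEq V] (E : Finset (Finset V)) (k r p t : ℕ)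
    (hk2 : 2 ≤ k) (hunif : ∀ e ∈ E, e.card = k) (hp3 : 3 ≤ p) (hpr : p ≤ r) (hpk : p ≤ k)
    (v : V) (E' : Finset (Finset V))
    (hE' : E' = (E.filter (fun e => v ∈ e)).image (fun e => e.erase v) ∪
        (E.filter (fun e => v ∉ e)).biUnion (fun e => Finset.powersetCard (k - 1) e))
    (hcov : HasStrongCover E r p t) :
    HasStrongCover E' r (p - 1) t ∧
      coverNumber E' r (p - 1) ≤ coverNumber E r p := by
  have key : ∀ t', HasStrongCover E r p t' → HasStrongCover E' r (p - 1) t' := by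
    rintro t' ⟨χ, hχ⟩
    refine ⟨χ, ?_⟩
    intro e' he'
    rw [hE', Finset.mem_union] at he'
    rcases he' with he' | he'
    · obtain ⟨e, he, rfl⟩ := Finset.mem_image.mp he'
      rw [Finset.mem_filter] at he
      obtain ⟨i, hi⟩ := hχ e he.1
      refine ⟨i, ?_⟩
      have hsub : e.erase v ⊆ e := Finset.erase_subset _ _
      have h1 := image_card_le_aux (χ i) hsub
      have h2 : (e \ e.erase v).card ≤ 1 := by
        have : e \ e.erase v ⊆ {v} := by
          intro x hx
          rw [Finset.mem_sdiff, Finset.mem_erase] at hx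
          simp only [Finset.mem_singleton]
          by_contra hne
          exact hx.2 ⟨hne, hx.1⟩
        simpa using Finset.card_le_card this
      omega
    · obtain ⟨e, he, he'⟩ := Finset.mem_biUnion.mp he'
      rw [Finset.mem_filter] at he
      rw [Finset.mem_powersetCard] at he'
      obtain ⟨i, hi⟩ := hχ e he.1
      refine ⟨i, ?_⟩
      have h1 := image_card_le_aux (χ i) he'.1
      have h2 : (e \ e').card = 1 := by
        rw [Finset.card_sdiff_of_subset he'.1, he'.2, hunif e he.1]
        omega
      omega
  refine ⟨key t hcov, ?_⟩
  have hne : {t' | HasStrongCover E r p t'}.Nonempty := ⟨t, hcov⟩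
  exact Nat.sInf_le (key _ (Nat.sInf_mem hne))
end

section
/- The complete 3-uniform hypergraph K_7^3 on 7 vertices has no strong (3,3) cover of size 3; that is, for any three 3-colorings X_1, X_2, X_3 of a 7-element vertex set, there exists a 3-element subset of the vertices that fails to receive 3 distinct colors in each of X_1, X_2, X_3. Hence χ^c(K_7^3,3,3,3) ≥ 4. -/
open Finset

/-- The complete `k`-uniform hypergraph on `Fin n`: all `k`-element subsets of the vertices. -/
def completeEdges (n k : ℕ) : Finset (Finset (Fin n)) :=
  Finset.powersetCard k (Finset.univ : Finset (Fin n))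

lemma shrink (S : Finset (Fin 7)) (f : Fin 7 → Fin 3) :
    ∃ T ⊆ S, 2 * S.card ≤ 3 * T.card ∧ (T.image f).card ≤ 2 := by
  have hsum : S.card = ∑ c : Fin 3, (S.filter (fun x => f x = c)).card :=
    Finset.card_eq_sum_card_fiberwise (fun x _ => Finset.mem_univ (f x))
  have hex : ∃ c ∈ (Finset.univ : Finset (Fin 3)),
      3 * (S.filter (fun x => f x = c)).card ≤ S.card := by
    apply Finset.exists_le_of_sum_le ⟨0, Finset.mem_univ 0⟩
    rw [← Finset.mul_sum, ← hsum, Finset.sum_const]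
    simp [mul_comm]
  obtain ⟨c, -, hc⟩ := hex
  refine ⟨S.filter (fun x => f x ≠ c), Finset.filter_subset _ _, ?_, ?_⟩
  · have h1 : (S.filter (fun x => f x ≠ c)).card
        = S.card - (S.filter (fun x => f x = c)).card := by
      rw [Finset.filter_not, Finset.card_sdiff_of_subset (Finset.filter_subset _ _)]
    have h2 : (S.filter (fun x => f x = c)).card ≤ S.card := Finset.card_filter_le _ _
    omega
  · have hsub : (S.filter (fun x => f x ≠ c)).image f ⊆ Finset.univ.erase c := by
      intro y hy
      obtain ⟨x, hx, rfl⟩ := Finset.mem_image.mp hy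
      exact Finset.mem_erase.mpr ⟨(Finset.mem_filter.mp hx).2, Finset.mem_univ _⟩
    calc ((S.filter (fun x => f x ≠ c)).image f).card ≤ (Finset.univ.erase c).card :=
          Finset.card_le_card hsub
      _ = 2 := by rw [Finset.card_erase_of_mem (Finset.mem_univ c)]; simp

lemma part1 (X₁ X₂ X₃ : Fin 7 → Fin 3) : ∃ s : Finset (Fin 7), s.card = 3 ∧
    (s.image X₁).card < 3 ∧ (s.image X₂).card < 3 ∧ (s.image X₃).card < 3 := by
  obtain ⟨T₁, hT₁s, hT₁c, hT₁i⟩ := shrink Finset.univ X₁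
  obtain ⟨T₂, hT₂s, hT₂c, hT₂i⟩ := shrink T₁ X₂
  obtain ⟨T₃, hT₃s, hT₃c, hT₃i⟩ := shrink T₂ X₃
  have hu : (Finset.univ : Finset (Fin 7)).card = 7 := by simp
  have h3 : 3 ≤ T₃.card := by omega
  obtain ⟨s, hs, hcard⟩ := Finset.exists_subset_card_eq h3
  refine ⟨s, hcard, ?_, ?_, ?_⟩
  · have := Finset.card_le_card
      (Finset.image_subset_image (hs.trans (hT₃s.trans hT₂s)) (f := X₁))
    omega
  · have := Finset.card_le_card (Finset.image_subset_image (hs.trans hT₃s) (f := X₂))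
    omega
  · have := Finset.card_le_card (Finset.image_subset_image hs (f := X₃))
    omega

def wit : Fin 49 → Fin 7 → Fin 3 := fun k v =>
  if v.val = k.val / 7 then 0 else if v.val = k.val % 7 then 1 else 2

set_option maxRecDepth 10000 in
lemma witness : HasStrongCover (completeEdges 7 3) 3 3 49 :=
  ⟨wit, by decide⟩

theorem stmt4 :
    (∀ X₁ X₂ X₃ : Fin 7 → Fin 3, ∃ s : Finset (Fin 7), s.card = 3 ∧
      (s.image X₁).card < 3 ∧ (s.image X₂).card < 3 ∧ (s.image X₃).card < 3) ∧
    4 ≤ coverNumber (completeEdges 7 3) 3 3 := by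
  refine ⟨part1, ?_⟩
  unfold coverNumber
  obtain ⟨χw, hw⟩ := witness
  have hne : {t | HasStrongCover (completeEdges 7 3) 3 3 t}.Nonempty := ⟨49, χw, hw⟩
  apply le_csInf hne
  rintro t ⟨χ, hχ⟩
  by_contra h
  push_neg at h
  have ht : t ≤ 3 := by omega
  set X : Fin 3 → Fin 7 → Fin 3 := fun i =>
    if h' : (i : ℕ) < t then χ ⟨i, h'⟩ else fun _ => 0 with hX
  obtain ⟨s, hs3, h1, h2, h3⟩ := part1 (X 0) (X 1) (X 2)
  have hsE : s ∈ completeEdges 7 3 :=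
    Finset.mem_powersetCard.mpr ⟨Finset.subset_univ s, hs3⟩
  obtain ⟨i, hi⟩ := hχ s hsE
  have hiv : (i : ℕ) < 3 := lt_of_lt_of_le i.isLt ht
  have : χ i = X ⟨i, hiv⟩ := by
    simp only [hX]
    rw [dif_pos i.isLt]
  rw [this] at hi
  interval_cases h' : (i : ℕ) <;> simp_all <;> omega
end

section
/- For the complete 3-uniform hypergraphs on 7, 8 and 9 vertices, the strong (3,3) cover numbers satisfy χ^c(K_7^3,3,3,3) = χ^c(K_8^3,3,3,3) = χ^c(K_9^3,3,3,3) = 4. That is, the minimum number of 3-colorings of the vertex set needed so that every 3-element vertex subset is rainbow (receives 3 distinct colors) in at least one coloring equals 4 for n = 7, 8 and 9. -/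
open Finset

-- helper small lemmas
lemma card3 {α : Type*} [DecidableEq α] {x y z : α} (hxy : x ≠ y) (hxz : x ≠ z) (hyz : y ≠ z) :
    ({x, y, z} : Finset α).card = 3 := by
  rw [card_insert_of_notMem (by simp [hxy, hxz]), card_insert_of_notMem (by simp [hyz]),
    card_singleton]

lemma cardle2 {α : Type*} [DecidableEq α] (p q : α) : ({p, p, q} : Finset α).card ≤ 2 := by
  rw [Finset.insert_idem]
  exact (card_insert_le _ _).trans (by simp)

lemma img3 {α β : Type*} [DecidableEq α] [DecidableEq β] (f : α → β) (x y z : α) :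
    ({x, y, z} : Finset α).image f = {f x, f y, f z} := by simp

lemma fin3_cases : ∀ c : Fin 3, c = 0 ∨ c = 1 ∨ c = 2 := by decide

lemma fin3_distinct : ∀ p q r : Fin 3, 3 ≤ ({p, q, r} : Finset (Fin 3)).card → p ≠ q ∧ p ≠ r ∧ q ≠ r := by decide

lemma fin3_distinct' : ∀ p q r : Fin 3, p ≠ q → p ≠ r → q ≠ r → 3 ≤ ({p, q, r} : Finset (Fin 3)).card := by decide

lemma fin3_third : ∀ a b : Fin 3, a ≠ b → ∃ c, c ≠ a ∧ c ≠ b ∧ ∀ i, i ≠ a → i ≠ b → i = c := by decide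

lemma arith12 (n0 n1 n2 : ℕ) (h : n0 + n1 + n2 = 7) : n0 * (n1 * n2) ≤ 12 := by
  have h0 : n0 ≤ 7 := by omega
  have h1 : n1 ≤ 7 := by omega
  have h2 : n2 ≤ 7 := by omega
  interval_cases n0 <;> interval_cases n1 <;> interval_cases n2 <;> simp_all

lemma arith3 (n0 n1 n2 : ℕ) (h : n0 + n1 + n2 = 7) (h11 : 11 ≤ n0 * (n1 * n2)) :
    n0 ≤ 3 ∧ n1 ≤ 3 ∧ n2 ≤ 3 := by
  have h0 : n0 ≤ 7 := by omega
  have h1 : n1 ≤ 7 := by omega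
  have h2 : n2 ≤ 7 := by omega
  interval_cases n0 <;> interval_cases n1 <;> interval_cases n2 <;> simp_all

section Lower
variable (χ : Fin 3 → Fin 7 → Fin 3)

def cls (i c : Fin 3) : Finset (Fin 7) := univ.filter (fun v => χ i v = c)

def Rn (i : Fin 3) : Finset (Finset (Fin 7)) :=
  (completeEdges 7 3).filter (fun e => 3 ≤ (e.image (χ i)).card)

lemma sum_cls (i : Fin 3) : ∑ c, (cls χ i c).card = 7 := by
  have h := Finset.card_eq_sum_card_fiberwise
    (f := χ i) (s := (univ : Finset (Fin 7))) (t := univ) (fun x _ => mem_univ _)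
  simpa [cls] using h.symm

lemma Rn_card_le (i : Fin 3) :
    (Rn χ i).card ≤ (cls χ i 0).card * ((cls χ i 1).card * (cls χ i 2).card) := by
  have hsub : Rn χ i ⊆ ((cls χ i 0) ×ˢ ((cls χ i 1) ×ˢ (cls χ i 2))).image
      (fun p => {p.1, p.2.1, p.2.2}) := by
    intro e he
    obtain ⟨heP, hre⟩ := mem_filter.1 he
    obtain ⟨-, he3⟩ := mem_powersetCard.1 heP
    have himg : (e.image (χ i)).card = 3 :=
      le_antisymm (le_trans (card_image_le) (le_of_eq he3)) hre
    have huniv : e.image (χ i) = (univ : Finset (Fin 3)) :=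
      Finset.eq_univ_of_card _ (by simpa using himg)
    have hfib : ∀ c : Fin 3, (e.filter (fun x => χ i x = c)).Nonempty := by
      intro c
      have : c ∈ e.image (χ i) := huniv ▸ mem_univ c
      obtain ⟨x, hx, hxc⟩ := mem_image.1 this
      exact ⟨x, mem_filter.2 ⟨hx, hxc⟩⟩
    have hsum : ∑ c : Fin 3, (e.filter (fun x => χ i x = c)).card = 3 := by
      have h := Finset.card_eq_sum_card_fiberwise
        (f := χ i) (s := e) (t := univ) (fun x _ => mem_univ _)
      rw [he3] at h; exact h.symm
    have hone : ∀ c : Fin 3, (e.filter (fun x => χ i x = c)).card = 1 := by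
      have h0 := Finset.card_pos.2 (hfib 0)
      have h1 := Finset.card_pos.2 (hfib 1)
      have h2 := Finset.card_pos.2 (hfib 2)
      rw [Fin.sum_univ_three] at hsum
      intro c
      rcases fin3_cases c with rfl | rfl | rfl <;> omega
    obtain ⟨a0, ha0⟩ := Finset.card_eq_one.1 (hone 0)
    obtain ⟨a1, ha1⟩ := Finset.card_eq_one.1 (hone 1)
    obtain ⟨a2, ha2⟩ := Finset.card_eq_one.1 (hone 2)
    have hmem : ∀ c (a : Fin 7), e.filter (fun x => χ i x = c) = {a} → a ∈ e ∧ χ i a = c := by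
      intro c a ha
      have : a ∈ e.filter (fun x => χ i x = c) := ha ▸ mem_singleton_self a
      exact ⟨(mem_filter.1 this).1, (mem_filter.1 this).2⟩
    have he_eq : e = {a0, a1, a2} := by
      apply Finset.ext
      intro x
      constructor
      · intro hx
        have hxf : x ∈ e.filter (fun y => χ i y = χ i x) := mem_filter.2 ⟨hx, rfl⟩
        rcases fin3_cases (χ i x) with h | h | h <;> rw [h] at hxf
        · rw [ha0] at hxf; simp [mem_singleton.1 hxf]
        · rw [ha1] at hxf; simp [mem_singleton.1 hxf]
        · rw [ha2] at hxf; simp [mem_singleton.1 hxf]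
      · intro hx
        rcases mem_insert.1 hx with h | hx
        · rw [h]; exact (hmem 0 a0 ha0).1
        rcases mem_insert.1 hx with h | hx
        · rw [h]; exact (hmem 1 a1 ha1).1
        · rw [mem_singleton.1 hx]; exact (hmem 2 a2 ha2).1
    apply mem_image.2
    refine ⟨(a0, a1, a2), ?_, he_eq.symm⟩
    apply mem_product.2
    constructor
    · exact mem_filter.2 ⟨mem_univ _, (hmem 0 a0 ha0).2⟩
    apply mem_product.2
    exact ⟨mem_filter.2 ⟨mem_univ _, (hmem 1 a1 ha1).2⟩,
      mem_filter.2 ⟨mem_univ _, (hmem 2 a2 ha2).2⟩⟩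
  calc (Rn χ i).card ≤ _ := card_le_card hsub
    _ ≤ _ := card_image_le
    _ = _ := by rw [card_product, card_product]

end Lower

section Lower2
variable {χ : Fin 3 → Fin 7 → Fin 3}
  (hcov : ∀ e ∈ completeEdges 7 3, ∃ i, 3 ≤ (e.image (χ i)).card)
  (hcls3 : ∀ i c, (cls χ i c).card ≤ 3)

lemma memP {x y z : Fin 7} (hxy : x ≠ y) (hxz : x ≠ z) (hyz : y ≠ z) :
    ({x, y, z} : Finset (Fin 7)) ∈ completeEdges 7 3 :=
  mem_powersetCard.2 ⟨subset_univ _, card3 hxy hxz hyz⟩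

include hcov hcls3 in
lemma pair_lemma : ∀ a b : Fin 3, a ≠ b → ∀ u v : Fin 7, u ≠ v →
    χ a u = χ a v → χ b u = χ b v → False := by
  intro a b hab u v huv hau hbu
  obtain ⟨c, hca, hcb, hcall⟩ := fin3_third a b hab
  -- any third vertex forces rainbow at coordinate c
  have key : ∀ w : Fin 7, w ≠ u → w ≠ v →
      3 ≤ (({u, v, w} : Finset (Fin 7)).image (χ c)).card := by
    intro w hwu hwv
    obtain ⟨i, hi⟩ := hcov {u, v, w} (memP huv (Ne.symm hwu) (Ne.symm hwv))
    rw [img3] at hi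
    have hic : i = c := by
      apply hcall
      · intro h; rw [h, hau] at hi
        exact absurd hi (by have := cardle2 (χ a v) (χ a w); simp only [Nat.not_le]; omega)
      · intro h; rw [h, hbu] at hi
        exact absurd hi (by have := cardle2 (χ b v) (χ b w); simp only [Nat.not_le]; omega)
    rw [hic] at hi
    rw [img3]; exact hi
  have hw : ∃ w : Fin 7, w ≠ u ∧ w ≠ v := by
    by_contra h
    push_neg at h
    have hsub : (univ : Finset (Fin 7)) ⊆ {u, v} := by
      intro w _
      rcases eq_or_ne w u with rfl | hwu
      · simp
      · simp [h w hwu]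
    have := Finset.card_le_card hsub
    simp only [card_univ, Fintype.card_fin] at this
    have h2 : ({u, v} : Finset (Fin 7)).card ≤ 2 := card_insert_le _ _ |>.trans (by simp)
    omega
  have hcuv : χ c u ≠ χ c v := by
    obtain ⟨w, hwu, hwv⟩ := hw
    have := key w hwu hwv
    rw [img3] at this
    exact (fin3_distinct _ _ _ this).1
  obtain ⟨t, ht⟩ := (by decide : ∀ x y : Fin 3, x ≠ y → ∃ t, ∀ z, z ≠ x → z ≠ y → z = t)
    _ _ hcuv
  have hall : (univ \ {u, v} : Finset (Fin 7)) ⊆ cls χ c t := by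
    intro w hwm
    rw [mem_sdiff] at hwm
    have hwu : w ≠ u := fun h => hwm.2 (by simp [h])
    have hwv : w ≠ v := fun h => hwm.2 (by simp [h])
    have h3 := key w hwu hwv
    rw [img3] at h3
    obtain ⟨-, h1, h2⟩ := fin3_distinct _ _ _ h3
    exact mem_filter.2 ⟨mem_univ _, ht _ (Ne.symm h1) (Ne.symm h2)⟩
  have hc5 : 5 ≤ (cls χ c t).card := by
    have hcard : (univ \ {u, v} : Finset (Fin 7)).card = 7 - ({u, v} : Finset (Fin 7)).card := by
      rw [card_sdiff_of_subset (subset_univ _), card_univ, Fintype.card_fin]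
    have h2 : ({u, v} : Finset (Fin 7)).card = 2 := by
      rw [card_insert_of_notMem (by simp [huv]), card_singleton]
    have := Finset.card_le_card hall
    omega
  exact absurd (hcls3 c t) (by omega)

end Lower2

section Lower3
variable {χ : Fin 3 → Fin 7 → Fin 3}
  (hcov : ∀ e ∈ completeEdges 7 3, ∃ i, 3 ≤ (e.image (χ i)).card)
  (hcls3 : ∀ i c, (cls χ i c).card ≤ 3)

include hcov hcls3 in
lemma get_triple (a : Fin 3) :
    ∃ e ∈ completeEdges 7 3,
      (∀ b, b ≠ a → 3 ≤ (e.image (χ b)).card) ∧ (e.image (χ a)).card ≤ 1 := by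
  -- some class of coordinate a has size exactly 3
  have hsum := sum_cls χ a
  rw [Fin.sum_univ_three] at hsum
  have h0 := hcls3 a 0
  have h1 := hcls3 a 1
  have h2 := hcls3 a 2
  have h3 : (cls χ a 0).card = 3 ∨ (cls χ a 1).card = 3 ∨ (cls χ a 2).card = 3 := by omega
  have key : ∀ c : Fin 3, (cls χ a c).card = 3 →
      ∃ e ∈ completeEdges 7 3,
        (∀ b, b ≠ a → 3 ≤ (e.image (χ b)).card) ∧ (e.image (χ a)).card ≤ 1 := by
    intro c hc
    obtain ⟨x, y, z, hxy, hxz, hyz, hset⟩ := Finset.card_eq_three.1 hc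
    have hx : χ a x = c := by
      have hm : x ∈ cls χ a c := by rw [hset]; simp
      exact (mem_filter.1 hm).2
    have hy : χ a y = c := by
      have hm : y ∈ cls χ a c := by rw [hset]; simp
      exact (mem_filter.1 hm).2
    have hz : χ a z = c := by
      have hm : z ∈ cls χ a c := by rw [hset]; simp
      exact (mem_filter.1 hm).2
    refine ⟨({x, y, z} : Finset (Fin 7)), memP hxy hxz hyz, ?_, ?_⟩
    · intro b hba
      have dxy : χ b x ≠ χ b y := fun h =>
        pair_lemma hcov hcls3 a b (Ne.symm hba) x y hxy (hx.trans hy.symm) h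
      have dxz : χ b x ≠ χ b z := fun h =>
        pair_lemma hcov hcls3 a b (Ne.symm hba) x z hxz (hx.trans hz.symm) h
      have dyz : χ b y ≠ χ b z := fun h =>
        pair_lemma hcov hcls3 a b (Ne.symm hba) y z hyz (hy.trans hz.symm) h
      rw [img3]
      exact fin3_distinct' _ _ _ dxy dxz dyz
    · rw [img3, hx, hy, hz]
      simp
  rcases h3 with hc | hc | hc
  exacts [key 0 hc, key 1 hc, key 2 hc]

end Lower3

theorem no3cover :
    ¬ ∃ χ : Fin 3 → Fin 7 → Fin 3, ∀ e ∈ completeEdges 7 3, ∃ i, 3 ≤ (e.image (χ i)).card := by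
  rintro ⟨χ, hcov⟩
  set P := completeEdges 7 3 with hPdef
  have hPcard : P.card = 35 := by
    rw [hPdef, completeEdges, Finset.card_powersetCard, card_univ, Fintype.card_fin]
    decide
  -- products of class sizes
  have hprod12 : ∀ i, (cls χ i 0).card * ((cls χ i 1).card * (cls χ i 2).card) ≤ 12 := by
    intro i
    have := sum_cls χ i
    rw [Fin.sum_univ_three] at this
    exact arith12 _ _ _ this
  have hR12 : ∀ i, (Rn χ i).card ≤ 12 := fun i => (Rn_card_le χ i).trans (hprod12 i)
  -- total coverage lower bound (simple version)
  have hcovsub : P ⊆ univ.biUnion (Rn χ) := by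
    intro e he
    obtain ⟨i, hi⟩ := hcov e he
    exact mem_biUnion.2 ⟨i, mem_univ _, mem_filter.2 ⟨he, hi⟩⟩
  have h35 : 35 ≤ ∑ i, (Rn χ i).card := by
    calc (35 : ℕ) = P.card := hPcard.symm
      _ ≤ (univ.biUnion (Rn χ)).card := card_le_card hcovsub
      _ ≤ ∑ i, (Rn χ i).card := card_biUnion_le
  -- every class has size ≤ 3
  have hcls3 : ∀ i c, (cls χ i c).card ≤ 3 := by
    have h11 : ∀ i, 11 ≤ (cls χ i 0).card * ((cls χ i 1).card * (cls χ i 2).card) := by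
      intro i
      rw [Fin.sum_univ_three] at h35
      have b0 := (Rn_card_le χ 0).trans (hprod12 0)
      have b1 := (Rn_card_le χ 1).trans (hprod12 1)
      have b2 := (Rn_card_le χ 2).trans (hprod12 2)
      have hi := Rn_card_le χ i
      rcases fin3_cases i with rfl | rfl | rfl <;> omega
    intro i c
    have hs := sum_cls χ i
    rw [Fin.sum_univ_three] at hs
    obtain ⟨e0, e1, e2⟩ := arith3 _ _ _ hs (h11 i)
    rcases fin3_cases c with rfl | rfl | rfl <;> assumption
  -- two doubly-rainbow triples
  obtain ⟨e1, he1P, he1r, he1c⟩ := get_triple hcov hcls3 0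
  obtain ⟨e2, he2P, he2r, he2c⟩ := get_triple hcov hcls3 1
  have hne : e1 ≠ e2 := by
    intro h
    have := he2r 0 (by decide)
    rw [← h] at this
    omega
  -- counting
  set cnt : Finset (Fin 7) → ℕ :=
    fun e => (univ.filter (fun i => 3 ≤ (e.image (χ i)).card)).card with hcnt
  have hswap : ∑ i, (Rn χ i).card = ∑ e ∈ P, cnt e := by
    have h1 : ∀ i, (Rn χ i).card = ∑ e ∈ P, if 3 ≤ (e.image (χ i)).card then 1 else 0 := by
      intro i
      rw [Rn, ← hPdef, Finset.card_filter]
    have h2 : ∀ e, cnt e = ∑ i : Fin 3, if 3 ≤ (e.image (χ i)).card then 1 else 0 :=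
      fun e => Finset.card_filter _ _
    simp only [h1, h2]
    exact Finset.sum_comm
  have hcnt1 : ∀ e ∈ P, 1 ≤ cnt e := by
    intro e he
    obtain ⟨i, hi⟩ := hcov e he
    exact Finset.card_pos.2 ⟨i, mem_filter.2 ⟨mem_univ _, hi⟩⟩
  have hcnte1 : 2 ≤ cnt e1 := by
    have hsub : ({1, 2} : Finset (Fin 3)) ⊆ univ.filter (fun i => 3 ≤ (e1.image (χ i)).card) := by
      intro i hi
      rcases mem_insert.1 hi with h | h
      · exact mem_filter.2 ⟨mem_univ _, by rw [h]; exact he1r 1 (by decide)⟩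
      · rw [mem_singleton.1 h]
        exact mem_filter.2 ⟨mem_univ _, he1r 2 (by decide)⟩
    calc (2:ℕ) = ({1, 2} : Finset (Fin 3)).card := by decide
      _ ≤ _ := card_le_card hsub
  have hcnte2 : 2 ≤ cnt e2 := by
    have hsub : ({0, 2} : Finset (Fin 3)) ⊆ univ.filter (fun i => 3 ≤ (e2.image (χ i)).card) := by
      intro i hi
      rcases mem_insert.1 hi with h | h
      · exact mem_filter.2 ⟨mem_univ _, by rw [h]; exact he2r 0 (by decide)⟩
      · rw [mem_singleton.1 h]
        exact mem_filter.2 ⟨mem_univ _, he2r 2 (by decide)⟩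
    calc (2:ℕ) = ({0, 2} : Finset (Fin 3)).card := by decide
      _ ≤ _ := card_le_card hsub
  -- sum lower bound 37
  have h37 : 37 ≤ ∑ e ∈ P, cnt e := by
    have hg : ∀ e ∈ P,
        (1 + ((if e = e1 then 1 else 0) + (if e = e2 then 1 else 0)) : ℕ) ≤ cnt e := by
      intro e he
      rcases eq_or_ne e e1 with rfl | h1
      · simp [hne, hcnte1]
      rcases eq_or_ne e e2 with rfl | h2
      · simp [h1, hcnte2]
      · simp [h1, h2, hcnt1 e he]
    have := Finset.sum_le_sum hg
    rw [Finset.sum_add_distrib, Finset.sum_add_distrib, Finset.sum_const, hPcard,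
      Finset.sum_ite_eq' P e1 (fun _ => (1:ℕ)), Finset.sum_ite_eq' P e2 (fun _ => (1:ℕ)),
      if_pos he1P, if_pos he2P] at this
    simpa using this
  have h36 : ∑ i, (Rn χ i).card ≤ 36 := by
    rw [Fin.sum_univ_three]
    have := hR12 0; have := hR12 1; have := hR12 2
    omega
  rw [hswap] at h36
  omega

-- upper bound: explicit cover of K_9^3 from AG(2,3)
def cov : Fin 4 → Fin 9 → Fin 3 :=
  fun i v =>
    let x : Fin 3 := ⟨v.val / 3, by omega⟩
    let y : Fin 3 := ⟨v.val % 3, Nat.mod_lt _ (by omega)⟩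
    match i with
    | 0 => x
    | 1 => y
    | 2 => x + y
    | 3 => x + y + y

set_option maxRecDepth 100000 in
set_option maxHeartbeats 2000000 in
lemma cov_works : ∀ e ∈ completeEdges 9 3, ∃ i : Fin 4, 3 ≤ (e.image (cov i)).card := by
  decide

lemma restrict {m n : ℕ} (h : m ≤ n) {t : ℕ}
    (hc : HasStrongCover (completeEdges n 3) 3 3 t) :
    HasStrongCover (completeEdges m 3) 3 3 t := by
  obtain ⟨χ, hχ⟩ := hc
  refine ⟨fun i v => χ i (Fin.castLE h v), ?_⟩
  intro e he
  have hcard : (e.map (Fin.castLEEmb h)).card = 3 := by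
    rw [Finset.card_map]
    exact (mem_powersetCard.1 he).2
  obtain ⟨i, hi⟩ := hχ (e.map (Fin.castLEEmb h))
    (mem_powersetCard.2 ⟨subset_univ _, hcard⟩)
  refine ⟨i, ?_⟩
  rwa [Finset.map_eq_image, Finset.image_image] at hi

lemma pad {V : Type*} [DecidableEq V] {E : Finset (Finset V)} {t t' : ℕ} (h : t ≤ t')
    (hc : HasStrongCover E 3 3 t) : HasStrongCover E 3 3 t' := by
  obtain ⟨χ, hχ⟩ := hc
  refine ⟨fun i v => if hi : (i : ℕ) < t then χ ⟨i, hi⟩ v else 0, ?_⟩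
  intro e he
  obtain ⟨i, hi⟩ := hχ e he
  refine ⟨⟨i, lt_of_lt_of_le i.2 h⟩, ?_⟩
  simpa [i.2] using hi

lemma no3cover' {n : ℕ} (h7 : 7 ≤ n) {t : ℕ} (ht : t ≤ 3)
    (hc : HasStrongCover (completeEdges n 3) 3 3 t) : False := by
  have h3 : HasStrongCover (completeEdges 7 3) 3 3 3 := restrict h7 (pad ht hc)
  exact no3cover h3

lemma coverNumber_eq_four {n : ℕ} (h7 : 7 ≤ n) (h9 : n ≤ 9) :
    coverNumber (completeEdges n 3) 3 3 = 4 := by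
  have hmem : HasStrongCover (completeEdges n 3) 3 3 4 :=
    restrict h9 ⟨cov, cov_works⟩
  have h4 : 4 ∈ {t | HasStrongCover (completeEdges n 3) 3 3 t} := hmem
  apply le_antisymm
  · exact Nat.sInf_le h4
  · apply le_csInf ⟨4, h4⟩
    intro t htS
    by_contra hlt
    exact no3cover' h7 (by omega) htS

theorem stmt5 :
    coverNumber (completeEdges 7 3) 3 3 = 4 ∧
    coverNumber (completeEdges 8 3) 3 3 = 4 ∧
    coverNumber (completeEdges 9 3) 3 3 = 4 :=
  ⟨coverNumber_eq_four (by norm_num) (by norm_num),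
   coverNumber_eq_four (by norm_num) (by norm_num),
   coverNumber_eq_four (by norm_num) (by norm_num)⟩
end

section
/- The strong (3,3) cover number of the complete 3-uniform hypergraph on 5 vertices is 3: χ^c(K_5^3,3,3,3) = 3. That is, there exist three 3-colorings of a 5-element vertex set such that every 3-element subset receives 3 distinct colors in at least one of them, but no two 3-colorings suffice. -/
open Finset

lemma fin3_eq (a b c d : Fin 3) (hab : a ≠ b) (hca : c ≠ a) (hcb : c ≠ b)
    (hda : d ≠ a) (hdb : d ≠ b) : c = d := by revert a b c d; decide

lemma fin3_false (a b c d : Fin 3) (hab : a ≠ b) (hac : a ≠ c) (hbc : b ≠ c)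
    (hda : d ≠ a) (hdb : d ≠ b) (hdc : d ≠ c) : False := by revert a b c d; decide

lemma tri_card (p q r : Fin 3) : 3 ≤ ({p, q, r} : Finset (Fin 3)).card ↔
    p ≠ q ∧ p ≠ r ∧ q ≠ r := by revert p q r; decide

lemma mem_complete (a b c : Fin 5) (hab : a ≠ b) (hac : a ≠ c) (hbc : b ≠ c) :
    ({a, b, c} : Finset (Fin 5)) ∈ completeEdges 5 3 := by
  rw [completeEdges, Finset.mem_powersetCard]
  refine ⟨Finset.subset_univ _, ?_⟩
  rw [Finset.card_insert_of_notMem (by simp [hab, hac]),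
    Finset.card_insert_of_notMem (by simp [hbc]), Finset.card_singleton]

lemma no_two_cover : ¬ HasStrongCover (completeEdges 5 3) 3 3 2 := by
  rintro ⟨χ, hχ⟩
  set f := χ 0 with hf
  set g := χ 1 with hg
  -- every triple of distinct vertices is rainbow under f or g
  have cov : ∀ a b c : Fin 5, a ≠ b → a ≠ c → b ≠ c →
      (f a ≠ f b ∧ f a ≠ f c ∧ f b ≠ f c) ∨ (g a ≠ g b ∧ g a ≠ g c ∧ g b ≠ g c) := by
    intro a b c hab hac hbc
    obtain ⟨i, hi⟩ := hχ _ (mem_complete a b c hab hac hbc)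
    have himg : ∀ h : Fin 5 → Fin 3,
        ({a, b, c} : Finset (Fin 5)).image h = {h a, h b, h c} := by
      intro h; simp
    fin_cases i
    · left
      have hi' : 3 ≤ (({a, b, c} : Finset (Fin 5)).image f).card := hi
      rw [himg] at hi'
      exact (tri_card _ _ _).1 hi'
    · right
      have hi' : 3 ≤ (({a, b, c} : Finset (Fin 5)).image g).card := hi
      rw [himg] at hi'
      exact (tri_card _ _ _).1 hi'
  -- pigeonhole: f has a monochromatic pair
  obtain ⟨x, y, hxy, hfxy⟩ := Fintype.exists_ne_map_eq_of_card_lt f (by simp)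
  -- the other three vertices
  have hScard : ((Finset.univ : Finset (Fin 5)) \ {x, y}).card = 3 := by
    rw [Finset.card_sdiff_of_subset (Finset.subset_univ _), Finset.card_univ,
      Finset.card_insert_of_notMem (by simp [hxy]), Finset.card_singleton]
    simp
  obtain ⟨z₁, z₂, z₃, h12, h13, h23, hS⟩ := Finset.card_eq_three.1 hScard
  have hz : ∀ z ∈ ({z₁, z₂, z₃} : Finset (Fin 5)), z ≠ x ∧ z ≠ y := by
    intro z hzS
    rw [← hS, Finset.mem_sdiff] at hzS
    have := hzS.2
    simp only [Finset.mem_insert, Finset.mem_singleton] at this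
    push_neg at this
    exact this
  obtain ⟨h1x, h1y⟩ := hz z₁ (by simp)
  obtain ⟨h2x, h2y⟩ := hz z₂ (by simp)
  obtain ⟨h3x, h3y⟩ := hz z₃ (by simp)
  -- triples {x,y,z} fail f, hence are g-rainbow
  have hg3 : ∀ z : Fin 5, z ≠ x → z ≠ y →
      g x ≠ g y ∧ g x ≠ g z ∧ g y ≠ g z := by
    intro z hzx hzy
    rcases cov x y z hxy hzx.symm hzy.symm with ⟨h, _⟩ | h
    · exact absurd hfxy h
    · exact h
  obtain ⟨hgxy, hgx1, hgy1⟩ := hg3 z₁ h1x h1y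
  obtain ⟨-, hgx2, hgy2⟩ := hg3 z₂ h2x h2y
  obtain ⟨-, hgx3, hgy3⟩ := hg3 z₃ h3x h3y
  -- so g is constant on {z₁,z₂,z₃}
  have hgz12 : g z₁ = g z₂ := fin3_eq (g x) (g y) _ _ hgxy hgx1.symm hgy1.symm hgx2.symm hgy2.symm
  have hgz13 : g z₁ = g z₃ := fin3_eq (g x) (g y) _ _ hgxy hgx1.symm hgy1.symm hgx3.symm hgy3.symm
  -- hence {z₁,z₂,z₃} fails g, so it is f-rainbow
  have hfz : f z₁ ≠ f z₂ ∧ f z₁ ≠ f z₃ ∧ f z₂ ≠ f z₃ := by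
    rcases cov z₁ z₂ z₃ h12 h13 h23 with h | ⟨h, _⟩
    · exact h
    · exact absurd hgz12 h
  -- triples {z₁,z₂,x} and {z₁,z₃,x} fail g, so f-rainbow
  have hfx12 : f z₁ ≠ f x ∧ f z₂ ≠ f x := by
    rcases cov z₁ z₂ x h12 h1x h2x with ⟨_, h, h'⟩ | ⟨h, _⟩
    · exact ⟨h, h'⟩
    · exact absurd hgz12 h
  have hfx13 : f z₃ ≠ f x := by
    rcases cov z₁ z₃ x h13 h1x h3x with ⟨_, _, h⟩ | ⟨h, _⟩
    · exact h
    · exact absurd hgz13 h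
  exact fin3_false (f z₁) (f z₂) (f z₃) (f x) hfz.1 hfz.2.1 hfz.2.2
    hfx12.1.symm hfx12.2.symm hfx13.symm

theorem stmt6 : coverNumber (completeEdges 5 3) 3 3 = 3 := by
  have h3 : HasStrongCover (completeEdges 5 3) 3 3 3 :=
    ⟨![![0,0,0,1,2], ![0,0,1,2,2], ![0,1,2,2,2]], by decide⟩
  refine le_antisymm (Nat.sInf_le h3) ?_
  by_contra h
  push_neg at h
  have hmem := Nat.sInf_mem (s := {t | HasStrongCover (completeEdges 5 3) 3 3 t}) ⟨3, h3⟩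
  rw [Set.mem_setOf_eq] at hmem
  set t := sInf {t | HasStrongCover (completeEdges 5 3) 3 3 t} with ht
  have hc : coverNumber (completeEdges 5 3) 3 3 = t := rfl
  have htle : t ≤ 2 := by omega
  apply no_two_cover
  obtain ⟨χ, hχ⟩ := hmem
  refine ⟨fun i v => if hi : (i : ℕ) < t then χ ⟨i, hi⟩ v else 0, ?_⟩
  intro e he
  obtain ⟨i, hi⟩ := hχ e he
  refine ⟨Fin.castLE htle i, ?_⟩
  show 3 ≤ (e.image fun v => if hj : ((Fin.castLE htle i : Fin 2) : ℕ) < t then χ ⟨_, hj⟩ v else 0).card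
  have hfun : (fun v => if hj : ((Fin.castLE htle i : Fin 2) : ℕ) < t then χ ⟨((Fin.castLE htle i : Fin 2) : ℕ), hj⟩ v else 0) = χ i := by
    funext v
    rw [dif_pos (show ((Fin.castLE htle i : Fin 2) : ℕ) < t from i.isLt)]
    congr 1
  rw [hfun]
  exact hi
end

section
/- Let G = (V,E) be a k-uniform hypergraph and let r ≥ p ≥ 2 with k ≥ p. Suppose the hyperedge set E can be partitioned into t matchings E_1, …, E_t, where a matching is a family of pairwise vertex-disjoint hyperedges. Then G has a strong (r,p) cover of size at most t; in particular χ^c(G,k,r,p) is at most the chromatic index (minimum number of matchings partitioning E) of G. -/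
open Finset

lemma aux_card {V : Type*} [DecidableEq V] (e : Finset V) (f : V → Fin r) (p : ℕ)
    (h : ∀ j < p, ∃ v ∈ e, (f v).val = j) : p ≤ (e.image f).card := by
  have hsub : Finset.range p ⊆ (e.image f).image Fin.val := by
    intro j hj
    simp only [Finset.mem_range] at hj
    obtain ⟨v, hv, hfv⟩ := h j hj
    simp only [Finset.mem_image]
    exact ⟨f v, ⟨v, hv, rfl⟩, hfv⟩
  calc p = (Finset.range p).card := (Finset.card_range p).symm
    _ ≤ ((e.image f).image Fin.val).card := Finset.card_le_card hsub
    _ = (e.image f).card := Finset.card_image_of_injective _ Fin.val_injective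

theorem stmt7 {V : Type*} [Fintype V] [DecidableEq V] (E : Finset (Finset V)) (k r p t : ℕ)
    (hunif : ∀ e ∈ E, e.card = k) (hp2 : 2 ≤ p) (hpr : p ≤ r) (hpk : p ≤ k)
    (M : Fin t → Finset (Finset V))
    (hsub : ∀ i, M i ⊆ E)
    (hcovers : ∀ e ∈ E, ∃ i, e ∈ M i)
    (hclasses : ∀ i j, i ≠ j → Disjoint (M i) (M j))
    (hmatching : ∀ i, ∀ e₁ ∈ M i, ∀ e₂ ∈ M i, e₁ ≠ e₂ → Disjoint e₁ e₂) :
    HasStrongCover E r p t ∧ coverNumber E r p ≤ t := by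
  classical
  -- uniqueness of the edge of a matching containing a given vertex
  have huniq : ∀ i, ∀ a ∈ M i, ∀ b ∈ M i, ∀ v, v ∈ a → v ∈ b → a = b := by
    intro i a ha b hb v hva hvb
    by_contra hne
    exact (Finset.disjoint_left.mp (hmatching i a ha b hb hne) hva) hvb
  have hcov : HasStrongCover E r p t := by
    refine ⟨fun i v =>
      if h : ∃ e ∈ M i, v ∈ e then
        ⟨min ((h.choose.equivFin ⟨v, h.choose_spec.2⟩ : Fin h.choose.card) : ℕ) (p - 1),
          by omega⟩
      else ⟨0, by omega⟩, ?_⟩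
    intro e he
    obtain ⟨i, hei⟩ := hcovers e he
    refine ⟨i, aux_card e _ p ?_⟩
    intro j hj
    have hke : e.card = k := hunif e he
    have hjk : j < e.card := by omega
    refine ⟨(e.equivFin.symm ⟨j, hjk⟩ : e).val, (e.equivFin.symm ⟨j, hjk⟩).prop, ?_⟩
    set v := (e.equivFin.symm ⟨j, hjk⟩ : e).val with hvdef
    have hv : v ∈ e := (e.equivFin.symm ⟨j, hjk⟩).prop
    have hex : ∃ e' ∈ M i, v ∈ e' := ⟨e, hei, hv⟩
    have hch : hex.choose = e :=
      huniq i hex.choose hex.choose_spec.1 e hei v hex.choose_spec.2 hv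
    simp only [dif_pos hex]
    have hidx : ((hex.choose.equivFin ⟨v, hex.choose_spec.2⟩ : Fin hex.choose.card) : ℕ) = j := by
      have key : ∀ (a : Finset V) (ha : a = e) (hva : v ∈ a),
          ((a.equivFin ⟨v, hva⟩ : Fin a.card) : ℕ) = j := by
        rintro a rfl hva
        have : (⟨v, hva⟩ : {x // x ∈ a}) = a.equivFin.symm ⟨j, hjk⟩ := Subtype.ext rfl
        rw [this, Equiv.apply_symm_apply]
      exact key hex.choose hch hex.choose_spec.2
    rw [hidx]
    show min j (p - 1) = j
    omega
  refine ⟨hcov, Nat.sInf_le hcov⟩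
end

section
/- Let G = (V,E) be a k-uniform hypergraph, let r ≥ p ≥ 2 with k ≥ p, and let x be a positive integer. If the number of hyperedges satisfies |E| ≤ (1/2)·( r^k / ((p−1)^k · C(r,p−1)) )^x, where C(r,p−1) is the binomial coefficient, then G has a strong (r,p) cover of size x; in particular χ^c(G,k,r,p) ≤ x. -/
open Finset

/-!
Union bound, carried out by counting. An edge `e` with `|e| = k` sees at most `q = p - 1` colours
exactly when its colouring takes values in some `q`-set of colours, so at most `C(r,q) q^k` of the
`r^k` colourings of `e` are bad for it, and `e` is missed by all of `x` colourings for at most a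
`(C(r,q) q^k / r^k)^x` fraction of the `x`-tuples of colourings of `V`. The hypothesis on `|E|`
makes these fractions sum to less than `1`, so some tuple misses no edge.
-/

section Colorings

variable {V α : Type*} [Fintype V] [DecidableEq V] [Fintype α] [DecidableEq α]

-- Multiplied through by `|α| ^ #e` so that no truncated subtraction `|V| - #e` appears.
theorem card_filter_forall_mem_mem_mul (e : Finset V) (S : Finset α) :
    #{f : V → α | ∀ v ∈ e, f v ∈ S} * Fintype.card α ^ #e =
      #S ^ #e * Fintype.card α ^ Fintype.card V := by
  have hpi : ({f : V → α | ∀ v ∈ e, f v ∈ S} : Finset (V → α)) =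
      Fintype.piFinset fun v => if v ∈ e then S else univ := by
    ext f
    simp only [mem_filter, mem_univ, true_and, Fintype.mem_piFinset]
    exact ⟨fun h v => by split_ifs with hv <;> simp [h v, hv], fun h v hv => by simpa [hv] using h v⟩
  rw [hpi, Fintype.card_piFinset]
  simp only [apply_ite card, card_univ]
  rw [prod_ite, prod_const, prod_const, mul_assoc, ← pow_add, filter_mem_eq_inter, univ_inter,
    ← sdiff_eq_filter, ← compl_eq_univ_sdiff, card_compl_add_card]

theorem card_filter_card_image_le_mul (e : Finset V) {q : ℕ} (hq : q ≤ Fintype.card α) :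
    #{f : V → α | #(e.image f) ≤ q} * Fintype.card α ^ #e ≤
      (Fintype.card α).choose q * q ^ #e * Fintype.card α ^ Fintype.card V := by
  have hsub : ({f : V → α | #(e.image f) ≤ q} : Finset (V → α)) ⊆
      (powersetCard q univ).biUnion fun S => {f | ∀ v ∈ e, f v ∈ S} := by
    intro f hf
    obtain ⟨S, hfS, -, hS⟩ := exists_subsuperset_card_eq (subset_univ (e.image f))
      (mem_filter.1 hf).2 (by rwa [card_univ])
    simp only [mem_biUnion, mem_powersetCard, mem_filter, mem_univ, true_and]
    exact ⟨S, ⟨subset_univ S, hS⟩, fun v hv => hfS (mem_image_of_mem f hv)⟩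
  calc _ ≤ #((powersetCard q univ).biUnion fun S => ({f | ∀ v ∈ e, f v ∈ S} : Finset (V → α))) *
        Fintype.card α ^ #e := by gcongr
    _ ≤ (∑ S ∈ powersetCard q (univ : Finset α), #{f : V → α | ∀ v ∈ e, f v ∈ S}) *
        Fintype.card α ^ #e := by gcongr; exact card_biUnion_le
    _ = ∑ _S ∈ powersetCard q (univ : Finset α), q ^ #e * Fintype.card α ^ Fintype.card V := by
      rw [sum_mul]
      refine sum_congr rfl fun S hS => ?_
      rw [card_filter_forall_mem_mem_mul, (mem_powersetCard.1 hS).2]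
    _ = _ := by rw [sum_const, card_powersetCard, card_univ, smul_eq_mul, mul_assoc]

theorem exists_forall_exists_lt_card_image [Nonempty α] (ι : Type*) [Fintype ι]
    {E : Finset (Finset V)} {k q : ℕ} (hE : ∀ e ∈ E, #e = k) (hq : q ≤ Fintype.card α)
    (h : #E * ((Fintype.card α).choose q * q ^ k) ^ Fintype.card ι <
      Fintype.card α ^ (k * Fintype.card ι)) :
    ∃ χ : ι → V → α, ∀ e ∈ E, ∃ i, q < #(e.image (χ i)) := by
  classical
  set r := Fintype.card α
  set n := Fintype.card V
  set m := Fintype.card ι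
  let bad : Finset V → Finset (ι → V → α) := fun e =>
    Fintype.piFinset fun _ => {f | #(e.image f) ≤ q}
  have hbad : ∀ e ∈ E, #(bad e) * (r ^ k) ^ m ≤ (r.choose q * q ^ k * r ^ n) ^ m := by
    intro e he
    simp only [bad]
    rw [Fintype.card_piFinset, prod_const, card_univ, ← mul_pow, ← hE e he]
    exact Nat.pow_le_pow_left (card_filter_card_image_le_mul e hq) m
  have hlt : #(E.biUnion bad) < #(univ : Finset (ι → V → α)) := by
    rw [card_univ, Fintype.card_fun, Fintype.card_fun]
    refine Nat.lt_of_mul_lt_mul_right (a := (r ^ k) ^ m) ?_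
    calc #(E.biUnion bad) * (r ^ k) ^ m ≤ (∑ e ∈ E, #(bad e)) * (r ^ k) ^ m := by
          gcongr; exact card_biUnion_le
      _ ≤ ∑ _e ∈ E, (r.choose q * q ^ k * r ^ n) ^ m := by rw [sum_mul]; exact sum_le_sum hbad
      _ = #E * (r.choose q * q ^ k) ^ m * (r ^ n) ^ m := by
        rw [sum_const, smul_eq_mul, mul_pow, mul_assoc]
      _ < (r ^ k) ^ m * (r ^ n) ^ m := by
        have : 0 < r := Fintype.card_pos
        rw [← pow_mul r k m]
        gcongr
      _ = _ := mul_comm _ _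
  obtain ⟨χ, -, hχ⟩ := exists_mem_notMem_of_card_lt_card hlt
  refine ⟨χ, fun e he => ?_⟩
  have : χ ∉ bad e := fun hmem => hχ (mem_biUnion.2 ⟨e, he, hmem⟩)
  simpa [bad] using this

theorem hasStrongCover_of_card_mul_pow_lt {E : Finset (Finset V)} {k r q x : ℕ}
    (hE : ∀ e ∈ E, #e = k) (hqr : q < r)
    (h : #E * (r.choose q * q ^ k) ^ x < r ^ (k * x)) : HasStrongCover E r (q + 1) x := by
  have : NeZero r := ⟨by omega⟩
  exact exists_forall_exists_lt_card_image (Fin x) (α := Fin r) hE (by simpa using hqr.le)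
    (by simpa using h)

end Colorings

theorem mul_pow_lt_pow_of_le_half_mul_div_pow {N R B : ℝ} (x : ℕ) (hR : 0 < R) (hB : 0 < B)
    (h : N ≤ 1 / 2 * (R / B) ^ x) : N * B ^ x < R ^ x :=
  calc N * B ^ x ≤ 1 / 2 * (R / B) ^ x * B ^ x := by gcongr
    _ = 1 / 2 * R ^ x := by rw [mul_assoc, ← mul_pow, div_mul_cancel₀ _ hB.ne']
    _ < R ^ x := by linarith [pow_pos hR x]

theorem stmt17_general {V : Type*} [Fintype V] [DecidableEq V] (E : Finset (Finset V)) (k r p x : ℕ)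
    (hunif : ∀ e ∈ E, e.card = k) (hp2 : 2 ≤ p) (hpr : p ≤ r)
    (hE : (E.card : ℝ) ≤
      (1 / 2) * ((r : ℝ) ^ k / (((p : ℝ) - 1) ^ k * (r.choose (p - 1) : ℝ))) ^ x) :
    HasStrongCover E r p x ∧ coverNumber E r p ≤ x := by
  obtain ⟨q, rfl⟩ : ∃ q, p = q + 1 := ⟨p - 1, by omega⟩
  have hr : (0 : ℝ) < r := by exact_mod_cast (by omega : 0 < r)
  have hq : (0 : ℝ) < q := by exact_mod_cast (by omega : 0 < q)
  have hC : (0 : ℝ) < r.choose q := by exact_mod_cast Nat.choose_pos (by omega)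
  have hreal : (E.card : ℝ) * (r.choose q * q ^ k) ^ x < (r ^ k) ^ x := by
    rw [mul_comm (r.choose q : ℝ)]
    refine mul_pow_lt_pow_of_le_half_mul_div_pow x (by positivity) (by positivity) ?_
    simpa using hE
  have hcover : HasStrongCover E r (q + 1) x :=
    hasStrongCover_of_card_mul_pow_lt hunif (by omega) (by rw [pow_mul]; exact_mod_cast hreal)
  exact ⟨hcover, Nat.sInf_le hcover⟩

theorem stmt17 {V : Type*} [Fintype V] [DecidableEq V] (E : Finset (Finset V)) (k r p x : ℕ)
    (hunif : ∀ e ∈ E, e.card = k) (hp2 : 2 ≤ p) (hpr : p ≤ r) (hpk : p ≤ k) (hx : 0 < x)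
    (hE : (E.card : ℝ) ≤
      (1 / 2) * ((r : ℝ) ^ k / (((p : ℝ) - 1) ^ k * (r.choose (p - 1) : ℝ))) ^ x) :
    HasStrongCover E r p x ∧ coverNumber E r p ≤ x :=
  stmt17_general E k r p x hunif hp2 hpr hE
end

section
/- Let G = (V,E) be a k-uniform hypergraph, let r ≥ p ≥ 2 with k ≥ p, and let x be a positive integer. Define the dependency d(G) as the maximum, over hyperedges e ∈ E, of the number of other hyperedges e' ∈ E with e' ≠ e and e' ∩ e ≠ ∅. If d(G) ≤ (1/e)·( r^k / ((p−1)^k · C(r,p−1)) )^x − 1, where e is Euler's number and C(r,p−1) is the binomial coefficient, then G has a strong (r,p) cover of size x; in particular χ^c(G,k,r,p) ≤ x. -/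
/-!
Give every vertex, independently and uniformly, a vector of `x` colors; the `i`-th entries
form the `i`-th coloring. A hyperedge `e` is badly covered when it sees at most `p - 1` colors
in each of the `x` colorings. Covering the colors seen by `e` with one of the `C(r, p - 1)` sets
of `p - 1` colors bounds the probability of this event by
`q = (C(r, p - 1) (p - 1)^k / r^k)^x`, and the event is mutually independent of the events of
the hyperedges disjoint from `e`, since these depend on disjoint sets of vertices. The
hypothesis on `d(G)` says `e q (d + 1) ≤ 1`, so the symmetric Lovász Local Lemma gives an
outcome avoiding every bad event, i.e. a strong cover of size `x`.

The local lemma is proved by counting: with `α = 1/(d + 1)` one shows by induction on `|S|`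
that `|A_i ∩ ⋂_{j ∈ S} A_jᶜ| ≤ α |⋂_{j ∈ S} A_jᶜ|`, separating `S` into the neighbors of `i`,
which cost a factor `(1 - α)` each, and the rest, which are independent of `A_i`.
-/

open Finset

/-- The dependency of a hypergraph: the maximum, over hyperedges `e`, of the number of other
hyperedges sharing at least one vertex with `e`. -/
def dependency {V : Type*} [DecidableEq V] (E : Finset (Finset V)) : ℕ :=
  E.sup fun e => (E.filter fun e' => e' ≠ e ∧ ¬ Disjoint e' e).card

lemma exists_le_mul_one_sub_pow {q : ℝ} (hq : 0 ≤ q) (d : ℕ)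
    (h : Real.exp 1 * q * (d + 1) ≤ 1) : ∃ α, 0 ≤ α ∧ α < 1 ∧ q ≤ α * (1 - α) ^ d := by
  have he := Real.add_one_lt_exp (x := 1) one_ne_zero
  -- The usual weight `1 / (d + 1)` equals `1` when `d = 0`; then `q` itself works.
  rcases Nat.eq_zero_or_pos d with rfl | hd
  · exact ⟨q, hq, by push_cast at h; nlinarith, by simp⟩
  refine ⟨(d + 1 : ℝ)⁻¹, by positivity, inv_lt_one_of_one_lt₀ (by simpa using hd), ?_⟩
  have hbase : 1 - (d + 1 : ℝ)⁻¹ = (1 + (d : ℝ)⁻¹)⁻¹ := by field_simp; ring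
  have hexp : (Real.exp 1)⁻¹ ≤ (1 - (d + 1 : ℝ)⁻¹) ^ d := by
    rw [hbase, inv_pow]
    exact inv_anti₀ (by positivity) Real.one_add_inv_pow_le_exp
  calc q ≤ (d + 1 : ℝ)⁻¹ * (Real.exp 1)⁻¹ := by
        rw [← mul_inv, ← one_div, le_div_iff₀ (by positivity)]
        linear_combination h
    _ ≤ (d + 1 : ℝ)⁻¹ * (1 - (d + 1 : ℝ)⁻¹) ^ d := by gcongr

namespace LovaszLocalLemma

variable {Ω ι : Type*} [Fintype Ω] [DecidableEq Ω]

def avoiding (A : ι → Finset Ω) (S : Finset ι) : Finset Ω := (S.biUnion A)ᶜ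

variable {A : ι → Finset Ω}

@[simp]
lemma mem_avoiding {S : Finset ι} {ω : Ω} : ω ∈ avoiding A S ↔ ∀ i ∈ S, ω ∉ A i := by
  simp [avoiding]

@[simp]
lemma avoiding_empty : avoiding A ∅ = univ := by simp [avoiding]

lemma avoiding_anti {S T : Finset ι} (h : S ⊆ T) : avoiding A T ⊆ avoiding A S :=
  compl_subset_compl.mpr (biUnion_subset_biUnion_of_subset_left A h)

lemma card_avoiding_insert_add [DecidableEq ι] (a : ι) (S : Finset ι) :
    #(avoiding A (insert a S)) + #(A a ∩ avoiding A S) = #(avoiding A S) := by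
  rw [avoiding, biUnion_insert, compl_union, inter_comm, ← sdiff_eq_inter_compl, ← avoiding,
    inter_comm, card_sdiff_add_card_inter]

lemma pow_mul_card_avoiding_le [DecidableEq ι] {α : ℝ} (hα : α ≤ 1) {T : Finset ι}
    (S : Finset ι) (h : ∀ a ∈ T, ∀ U ⊆ T, a ∉ U →
      (#(A a ∩ avoiding A (U ∪ S)) : ℝ) ≤ α * #(avoiding A (U ∪ S))) :
    (1 - α) ^ #T * #(avoiding A S) ≤ #(avoiding A (T ∪ S)) := by
  induction T using Finset.induction_on with
  | empty => simp
  | @insert a T haT ih =>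
    have ih' := ih fun b hb U hU => h b (mem_insert_of_mem hb) U (hU.trans (subset_insert a T))
    have hstep := h a (mem_insert_self a T) T (subset_insert a T) haT
    have hsplit : (#(avoiding A (insert a (T ∪ S))) : ℝ) + #(A a ∩ avoiding A (T ∪ S))
        = #(avoiding A (T ∪ S)) := by exact_mod_cast card_avoiding_insert_add a (T ∪ S)
    rw [card_insert_of_notMem haT, pow_succ', mul_assoc, insert_union]
    nlinarith

variable [DecidableEq ι] {I : Finset ι} {D : ι → ι → Prop} [DecidableRel D] {d : ℕ} {q α : ℝ}

lemma card_inter_avoiding_le [Nonempty Ω] (hα₀ : 0 ≤ α) (hα₁ : α ≤ 1)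
    (hq : q ≤ α * (1 - α) ^ d) (hA : ∀ i ∈ I, (#(A i) : ℝ) ≤ q * Fintype.card Ω)
    (hindep : ∀ i ∈ I, ∀ S ⊆ I, i ∉ S → (∀ j ∈ S, ¬ D i j) →
      #(A i ∩ avoiding A S) * Fintype.card Ω ≤ #(A i) * #(avoiding A S))
    (hdeg : ∀ i ∈ I, #{j ∈ I | j ≠ i ∧ D i j} ≤ d) (S : Finset ι) (hSI : S ⊆ I) :
    ∀ i ∈ I, i ∉ S → (#(A i ∩ avoiding A S) : ℝ) ≤ α * #(avoiding A S) := by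
  induction S using Finset.strongInduction with
  | H S ih =>
    intro i hi hiS
    set near := {j ∈ S | D i j}
    set far := {j ∈ S | ¬ D i j}
    have hfarS : far ⊆ S := filter_subset _ _
    have hfar : (#(A i ∩ avoiding A far) : ℝ) ≤ q * #(avoiding A far) := by
      have hN : (0 : ℝ) < Fintype.card Ω := by exact_mod_cast Fintype.card_pos
      have h := hindep i hi far (hfarS.trans hSI) (fun h => hiS (hfarS h))
        (fun j hj => (mem_filter.mp hj).2)
      have h' : (#(A i ∩ avoiding A far) : ℝ) * Fintype.card Ω
          ≤ #(A i) * #(avoiding A far) := by exact_mod_cast h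
      nlinarith [hA i hi, (#(avoiding A far)).cast_nonneg (α := ℝ)]
    have hnear : #near ≤ d := by
      refine (card_le_card fun j hj => ?_).trans (hdeg i hi)
      obtain ⟨hjS, hij⟩ := mem_filter.mp hj
      exact mem_filter.mpr ⟨hSI hjS, fun h => hiS (h ▸ hjS), hij⟩
    have htel : (1 - α) ^ #near * #(avoiding A far) ≤ #(avoiding A S) := by
      rw [← filter_union_filter_not_eq (D i) S]
      refine pow_mul_card_avoiding_le hα₁ far fun a ha U hU haU => ?_
      have haS : a ∈ S := (mem_filter.mp ha).1
      have haFar : a ∉ far := fun h => (mem_filter.mp h).2 (mem_filter.mp ha).2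
      have hUS : U ∪ far ⊆ S := union_subset (hU.trans (filter_subset _ _)) hfarS
      have haUfar : a ∉ U ∪ far := by simp [haU, haFar]
      exact ih (U ∪ far) ((ssubset_iff_of_subset hUS).mpr ⟨a, haS, haUfar⟩) (hUS.trans hSI) a
        (hSI haS) haUfar
    have hmono : #(A i ∩ avoiding A S) ≤ #(A i ∩ avoiding A far) :=
      card_le_card (inter_subset_inter_left (avoiding_anti hfarS))
    calc (#(A i ∩ avoiding A S) : ℝ) ≤ #(A i ∩ avoiding A far) := by exact_mod_cast hmono
      _ ≤ q * #(avoiding A far) := hfar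
      _ ≤ α * (1 - α) ^ #near * #(avoiding A far) := by
        gcongr
        exact hq.trans <| mul_le_mul_of_nonneg_left
          (pow_le_pow_of_le_one (by linarith) (by linarith) hnear) hα₀
      _ ≤ α * #(avoiding A S) := by rw [mul_assoc]; gcongr

theorem avoiding_nonempty [Nonempty Ω] (hα₀ : 0 ≤ α) (hα₁ : α < 1)
    (hq : q ≤ α * (1 - α) ^ d) (hA : ∀ i ∈ I, (#(A i) : ℝ) ≤ q * Fintype.card Ω)
    (hindep : ∀ i ∈ I, ∀ S ⊆ I, i ∉ S → (∀ j ∈ S, ¬ D i j) →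
      #(A i ∩ avoiding A S) * Fintype.card Ω ≤ #(A i) * #(avoiding A S))
    (hdeg : ∀ i ∈ I, #{j ∈ I | j ≠ i ∧ D i j} ≤ d) :
    (avoiding A I).Nonempty := by
  have h := pow_mul_card_avoiding_le hα₁.le (T := I) ∅ fun a ha U hU haU => by
    simpa using card_inter_avoiding_le hα₀ hα₁.le hq hA hindep hdeg U hU a ha haU
  simp only [avoiding_empty, card_univ, union_empty] at h
  have hpos : (0 : ℝ) < (1 - α) ^ #I * Fintype.card Ω := by
    have : (0 : ℝ) < Fintype.card Ω := by exact_mod_cast Fintype.card_pos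
    have : 0 < 1 - α := by linarith
    positivity
  exact card_pos.mp (by exact_mod_cast hpos.trans_le h)

theorem avoiding_nonempty_of_exp_mul_le_one [Nonempty Ω] (hq₀ : 0 ≤ q)
    (hq : Real.exp 1 * q * (d + 1) ≤ 1) (hA : ∀ i ∈ I, (#(A i) : ℝ) ≤ q * Fintype.card Ω)
    (hindep : ∀ i ∈ I, ∀ S ⊆ I, i ∉ S → (∀ j ∈ S, ¬ D i j) →
      #(A i ∩ avoiding A S) * Fintype.card Ω ≤ #(A i) * #(avoiding A S))
    (hdeg : ∀ i ∈ I, #{j ∈ I | j ≠ i ∧ D i j} ≤ d) :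
    (avoiding A I).Nonempty := by
  obtain ⟨α, hα₀, hα₁, hqα⟩ := exists_le_mul_one_sub_pow hq₀ d hq
  exact avoiding_nonempty hα₀ hα₁ hqα hA hindep hdeg

end LovaszLocalLemma

lemma card_inter_mul_card_eq_of_dependsOn {α : Type*} {β : α → Type*} [Fintype α]
    [DecidableEq α] [∀ a, Fintype (β a)] [∀ a, DecidableEq (β a)] (s : Finset α)
    {X Y : Finset (∀ a, β a)}
    (hX : DependsOn (· ∈ X) s) (hY : DependsOn (· ∈ Y) (↑s)ᶜ) :
    #(X ∩ Y) * Fintype.card (∀ a, β a) = #X * #Y := by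
  have hX' : ∀ ω ω', ω ∈ X → s.piecewise ω ω' ∈ X := fun ω ω' hω =>
    (hX fun a ha => (s.piecewise_eq_of_mem ω ω' ha).symm).mp hω
  have hY' : ∀ ω ω', ω' ∈ Y → s.piecewise ω ω' ∈ Y := fun ω ω' hω' =>
    (hY fun a ha => (s.piecewise_eq_of_notMem ω ω' ha).symm).mp hω'
  rw [← card_univ, ← card_product, ← card_product]
  refine card_nbij' (fun z => (s.piecewise z.1 z.2, s.piecewise z.2 z.1))
    (fun z => (s.piecewise z.1 z.2, s.piecewise z.2 z.1)) ?_ ?_ ?_ ?_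
  · rintro ⟨ω, ω'⟩ h
    simp only [coe_product, Set.mem_prod, mem_coe, mem_inter] at h ⊢
    exact ⟨hX' _ _ h.1.1, hY' _ _ h.1.2⟩
  · rintro ⟨ω, ω'⟩ h
    simp only [coe_product, Set.mem_prod, mem_coe, mem_inter, mem_univ, and_true] at h ⊢
    exact ⟨hX' _ _ h.1, hY' _ _ h.2⟩
  all_goals rintro ⟨ω, ω'⟩ -; simp [piecewise_same]

lemma card_forall_mem_mul_pow {V β : Type*} [Fintype V] [DecidableEq V] [Fintype β]
    [DecidableEq β] (e : Finset V) (T : Finset β) :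
    #{f : V → β | ∀ v ∈ e, f v ∈ T} * Fintype.card β ^ #e
      = #T ^ #e * Fintype.card β ^ Fintype.card V := by
  have hpi : ({f : V → β | ∀ v ∈ e, f v ∈ T} : Finset _)
      = Fintype.piFinset fun v => if v ∈ e then T else univ := by
    ext f; simp only [mem_filter, mem_univ, true_and, Fintype.mem_piFinset]
    exact ⟨fun h v => by split_ifs with hv <;> simp [h v, hv],
      fun h v hv => by simpa [hv] using h v⟩
  calc #{f : V → β | ∀ v ∈ e, f v ∈ T} * Fintype.card β ^ #e
      = (∏ v, if v ∈ e then #T else Fintype.card β)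
          * ∏ v, if v ∈ e then Fintype.card β else 1 := by
        rw [hpi, Fintype.card_piFinset, prod_ite_mem_eq, prod_const]
        congr 1
        exact prod_congr rfl fun v _ => by split_ifs <;> simp
    _ = ∏ v, (if v ∈ e then #T else 1) * Fintype.card β := by
        rw [← prod_mul_distrib]
        exact prod_congr rfl fun v _ => by split_ifs <;> ring
    _ = #T ^ #e * Fintype.card β ^ Fintype.card V := by
        rw [prod_mul_distrib, prod_ite_mem_eq, prod_const, prod_const, card_univ]

lemma card_card_image_le_mul_pow {V β : Type*} [Fintype V] [DecidableEq V] [Fintype β]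
    [DecidableEq β] (e : Finset V) {m : ℕ} (hm : m ≤ Fintype.card β) :
    #{f : V → β | #(e.image f) ≤ m} * Fintype.card β ^ #e
      ≤ (Fintype.card β).choose m * m ^ #e * Fintype.card β ^ Fintype.card V := by
  have hcover : ({f : V → β | #(e.image f) ≤ m} : Finset _)
      ⊆ (powersetCard m univ).biUnion fun T => {f | ∀ v ∈ e, f v ∈ T} := by
    intro f hf
    obtain ⟨T, hfT, hT⟩ := exists_superset_card_eq (mem_filter.mp hf).2 (by simpa using hm)
    exact mem_biUnion.mpr ⟨T, mem_powersetCard.mpr ⟨subset_univ T, hT⟩,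
      mem_filter.mpr ⟨mem_univ f, fun v hv => hfT (mem_image_of_mem f hv)⟩⟩
  calc #{f : V → β | #(e.image f) ≤ m} * Fintype.card β ^ #e
      ≤ (∑ T ∈ powersetCard m univ, #{f : V → β | ∀ v ∈ e, f v ∈ T})
          * Fintype.card β ^ #e := by
        gcongr
        exact (card_le_card hcover).trans card_biUnion_le
    _ = ∑ T ∈ powersetCard m (univ : Finset β), m ^ #e * Fintype.card β ^ Fintype.card V := by
        rw [sum_mul]
        exact sum_congr rfl fun T hT => by
          rw [card_forall_mem_mul_pow, (mem_powersetCard.mp hT).2]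
    _ = (Fintype.card β).choose m * m ^ #e * Fintype.card β ^ Fintype.card V := by
        rw [sum_const, card_powersetCard, card_univ, smul_eq_mul, mul_assoc]

open LovaszLocalLemma

section StrongCover

variable {V : Type*} [Fintype V] [DecidableEq V]

/-- Vertex `v` gets color `ω v i` in the `i`-th of the `x` colorings; the event is that `e`
receives at most `m` colors in each of them. -/
def badEvent (x r m : ℕ) (e : Finset V) : Finset (V → Fin x → Fin r) :=
  {ω | ∀ i, #(e.image (ω · i)) ≤ m}

variable {x r m : ℕ}

@[simp]
lemma mem_badEvent {e : Finset V} {ω : V → Fin x → Fin r} :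
    ω ∈ badEvent x r m e ↔ ∀ i, #(e.image (ω · i)) ≤ m := by
  simp [badEvent]

lemma dependsOn_mem_badEvent (e : Finset V) : DependsOn (· ∈ badEvent x r m e) e := by
  intro ω ω' h
  have himage : ∀ i, e.image (ω · i) = e.image (ω' · i) := fun i =>
    image_congr fun v hv => by simp [h v hv]
  simp only [mem_badEvent, himage]

lemma card_badEvent_le (hr : 0 < r) (hm : m ≤ r) (e : Finset V) :
    (#(badEvent x r m e) : ℝ)
      ≤ ((r.choose m * m ^ #e : ℝ) / r ^ #e) ^ x * Fintype.card (V → Fin x → Fin r) := by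
  have hcount := card_card_image_le_mul_pow (V := V) e (β := Fin r) (m := m) (by simpa using hm)
  rw [Fintype.card_fin] at hcount
  have hcard : #(badEvent x r m e) = #{f : V → Fin r | #(e.image f) ≤ m} ^ x := by
    rw [← Fintype.card_piFinset_const]
    exact card_equiv (Equiv.piComm _) fun ω => by simp [Equiv.piComm]
  have hN : Fintype.card (V → Fin x → Fin r) = (r ^ Fintype.card V) ^ x := by
    simp [← pow_mul, mul_comm]
  rw [hcard, hN, div_pow, div_mul_eq_mul_div, le_div_iff₀ (by positivity)]
  exact_mod_cast (mul_pow _ _ x).symm.trans_le <| (Nat.pow_le_pow_left hcount x).trans_eq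
    (mul_pow _ _ x)

lemma card_inter_avoiding_badEvent {e : Finset V} {S : Finset (Finset V)}
    (hS : ∀ e' ∈ S, Disjoint e' e) :
    #(badEvent x r m e ∩ avoiding (badEvent x r m) S) * Fintype.card (V → Fin x → Fin r)
      = #(badEvent x r m e) * #(avoiding (badEvent x r m) S) := by
  refine card_inter_mul_card_eq_of_dependsOn e (dependsOn_mem_badEvent e) fun ω ω' h => ?_
  simp only [mem_avoiding]
  refine propext <| forall₂_congr fun e' he' => not_congr <| iff_of_eq <|
    dependsOn_mem_badEvent e' fun v hv => h v ?_
  exact disjoint_left.mp (hS e' he') hv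

lemma hasStrongCover_of_avoiding_badEvent_nonempty {E : Finset (Finset V)} {p : ℕ}
    (h : (avoiding (badEvent x r (p - 1)) E).Nonempty) : HasStrongCover E r p x := by
  obtain ⟨ω, hω⟩ := h
  refine ⟨fun i v => ω v i, fun e he => ?_⟩
  obtain ⟨i, hi⟩ : ∃ i, ¬ #(e.image (ω · i)) ≤ p - 1 := by
    simpa using mem_avoiding.mp hω e he
  exact ⟨i, by dsimp only; omega⟩

end StrongCover

theorem stmt18_general {V : Type*} [Fintype V] [DecidableEq V] (E : Finset (Finset V)) (k r p x : ℕ)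
    (hunif : ∀ e ∈ E, e.card = k) (hp2 : 2 ≤ p) (hpr : p ≤ r)
    (hd : (dependency E : ℝ) ≤
      (1 / Real.exp 1) *
        ((r : ℝ) ^ k / (((p : ℝ) - 1) ^ k * (r.choose (p - 1) : ℝ))) ^ x - 1) :
    HasStrongCover E r p x ∧ coverNumber E r p ≤ x := by
  have hr : 0 < r := by omega
  have : NeZero r := ⟨hr.ne'⟩
  set q : ℝ := (r.choose (p - 1) * ((p - 1 : ℕ) : ℝ) ^ k / r ^ k) ^ x with hq_def
  have hq_pos : 0 < q := by
    have : 0 < r.choose (p - 1) := Nat.choose_pos (by omega)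
    have : 0 < p - 1 := by omega
    positivity
  have hq : Real.exp 1 * q * (dependency E + 1) ≤ 1 := by
    have hinv : ((r : ℝ) ^ k / (((p : ℝ) - 1) ^ k * (r.choose (p - 1) : ℝ))) ^ x = q⁻¹ := by
      rw [hq_def, ← inv_pow, inv_div, mul_comm, Nat.cast_sub (by omega), Nat.cast_one]
    rw [hinv] at hd
    calc Real.exp 1 * q * (dependency E + 1) ≤ Real.exp 1 * q * (1 / Real.exp 1 * q⁻¹) := by
          gcongr; linarith
      _ = 1 := by field_simp
  have hcover := hasStrongCover_of_avoiding_badEvent_nonempty <|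
    avoiding_nonempty_of_exp_mul_le_one (D := fun e e' => ¬ Disjoint e' e) hq_pos.le hq
      (fun e he => by simpa [hunif e he] using card_badEvent_le hr (by omega) e)
      (fun e _ S _ _ hS =>
        (card_inter_avoiding_badEvent fun e' he' => not_not.mp (hS e' he')).le)
      (fun e he => le_sup (f := fun e => #{e' ∈ E | e' ≠ e ∧ ¬ Disjoint e' e}) he)
  exact ⟨hcover, Nat.sInf_le hcover⟩

theorem stmt18 {V : Type*} [Fintype V] [DecidableEq V] (E : Finset (Finset V)) (k r p x : ℕ)
    (hunif : ∀ e ∈ E, e.card = k) (hp2 : 2 ≤ p) (hpr : p ≤ r) (hpk : p ≤ k) (hx : 0 < x)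
    (hd : (dependency E : ℝ) ≤
      (1 / Real.exp 1) *
        ((r : ℝ) ^ k / (((p : ℝ) - 1) ^ k * (r.choose (p - 1) : ℝ))) ^ x - 1) :
    HasStrongCover E r p x ∧ coverNumber E r p ≤ x :=
  stmt18_general E k r p x hunif hp2 hpr hd
end
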